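/- Source–channel converse for the additive mod-q MAC (finite-blocklength Fano form): let q ≥ 1, n ≥ 1, let U₁ = (U_{1,1},…,U_{1,n}) and U₂ = (U_{2,1},…,U_{2,n}) be source sequences with values in finite sets 𝒰₁^n and 𝒰₂^n, and let V = (V_1,…,V_n) with V_i ∈ ℤ/qℤ be noise, all on a common probability space with V^n independent of (U₁^n, U₂^n). Suppose the channel inputs are X_{l,i} = g_{l,i}(U_l^n, Y^{i−1}) ∈ ℤ/qℤ for deterministic encoding functions g_{l,i} (l = 1,2), the output is Y_i = X_{1,i} + X_{2,i} + V_i (addition mod q), the decoder outputs (Û₁^n, Û₂^n) = ψ(Y^n) for a deterministic function ψ, and the error probability is P_e = Pr((Û₁^n, Û₂^n) ≠ (U₁^n, U₂^n)). Then H(U₁^n, U₂^n) ≤ n·log q − H(V^n) + log 2 + P_e · log(|𝒰₁|^n |𝒰₂|^n). -/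

import Mathlib

/-!
Given the sources, the noise is a bijective function of the output: `V_i = Y_i - X_{1,i} - X_{2,i}`
where the inputs are computed from the sources and `Y^{i-1}`, so the outputs can be rebuilt from
the noise one coordinate at a time. With independence this gives
`H(U) + H(V^n) = H(V^n, U) = H(Y^n, U)`. Fano's error variable `W` (`none` on correct decoding,
`some U` otherwise) is again a bijective function of `U` given `Y^n`, hence
`H(Y^n, U) = H(Y^n, W) ≤ H(Y^n) + H(W) ≤ n log q + log 2 + P_e log |𝒰₁^n × 𝒰₂^n|`.
-/

open Finset

set_option synthInstance.maxSize 1000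

/-- Probability mass of the event `X = a` under the weight function `μ` on the finite
sample space `Ω`. -/
noncomputable def pmass {Ω α : Type*} [Fintype Ω] [DecidableEq α]
    (μ : Ω → ℝ) (X : Ω → α) (a : α) : ℝ := ∑ ω, if X ω = a then μ ω else 0

/-- Shannon entropy (natural logarithm) of the discrete random variable `X` defined on the
finite probability space `(Ω, μ)`. -/
noncomputable def entropy {Ω α : Type*} [Fintype Ω] [Fintype α] [DecidableEq α]
    (μ : Ω → ℝ) (X : Ω → α) : ℝ := ∑ a, Real.negMulLog (pmass μ X a)

open Real Function

theorem sum_negMulLog_le_negMulLog_sum_add {ι : Type*} [Fintype ι] (p : ι → ℝ)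
    (hp : ∀ i, 0 ≤ p i) :
    ∑ i, negMulLog (p i) ≤ negMulLog (∑ i, p i) + (∑ i, p i) * log (Fintype.card ι) := by
  rcases isEmpty_or_nonempty ι with hι | hι
  · simp
  set N : ℝ := (Fintype.card ι : ℝ)
  have hN : 0 < N := Nat.cast_pos.2 Fintype.card_pos
  have jensen := concaveOn_negMulLog.le_map_sum (t := univ) (w := fun _ => N⁻¹) (p := p)
    (fun _ _ => by positivity) (by simp [N]) (fun i _ => hp i)
  simp only [smul_eq_mul, ← mul_sum] at jensen
  rw [negMulLog_mul, negMulLog, log_inv] at jensen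
  have := mul_le_mul_of_nonneg_left jensen hN.le
  field_simp at this
  linarith

theorem negMulLog_add_mul_log_le {p r : ℝ} (hp : 0 ≤ p) (hr : 0 ≤ r) (hpr : r = 0 → p = 0) :
    negMulLog p + p * log r ≤ r - p := by
  obtain rfl | hr := hr.eq_or_lt
  · simp [hpr rfl]
  have key : r * negMulLog (p / r) = negMulLog p + p * log r := by
    conv_rhs => rw [← mul_div_cancel₀ p hr.ne', negMulLog_mul]
    simp only [negMulLog]
    field_simp
    ring
  have := mul_le_mul_of_nonneg_left (negMulLog_le_one_sub_self (div_nonneg hp hr.le)) hr.le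
  rw [key, mul_sub, mul_div_cancel₀ p hr.ne'] at this
  linarith

theorem sum_negMulLog_le_sum_neg_mul_log {ι : Type*} [Fintype ι] {p r : ι → ℝ}
    (hp : ∀ i, 0 ≤ p i) (hr : ∀ i, 0 ≤ r i) (hp1 : ∑ i, p i = 1) (hr1 : ∑ i, r i ≤ 1)
    (hpr : ∀ i, r i = 0 → p i = 0) :
    ∑ i, negMulLog (p i) ≤ ∑ i, -(p i * log (r i)) := by
  have := sum_le_sum fun i (_ : i ∈ univ) => negMulLog_add_mul_log_le (hp i) (hr i) (hpr i)
  simp only [sum_add_distrib, sum_sub_distrib, sum_neg_distrib] at this ⊢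
  linarith

section Entropy

variable {Ω α β γ : Type*} [Fintype Ω] {μ : Ω → ℝ}

theorem pmass_nonneg [DecidableEq α] (hμ0 : ∀ ω, 0 ≤ μ ω) (X : Ω → α) (a : α) :
    0 ≤ pmass μ X a :=
  sum_nonneg fun ω _ => by split_ifs <;> simp [hμ0 ω]

theorem sum_pmass [Fintype α] [DecidableEq α] (hμ1 : ∑ ω, μ ω = 1) (X : Ω → α) :
    ∑ a, pmass μ X a = 1 := by
  simp only [pmass]
  rw [sum_comm]
  simp [hμ1]

theorem sum_pmass_pair_right [DecidableEq α] [Fintype β] [DecidableEq β]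
    (A : Ω → α) (B : Ω → β) (a : α) :
    ∑ b, pmass μ (fun ω => (A ω, B ω)) (a, b) = pmass μ A a := by
  simp only [pmass, Prod.mk.injEq]
  rw [sum_comm]
  refine sum_congr rfl fun ω _ => ?_
  by_cases h : A ω = a <;> simp [h]

theorem sum_pmass_pair_left [Fintype α] [DecidableEq α] [DecidableEq β]
    (A : Ω → α) (B : Ω → β) (b : β) :
    ∑ a, pmass μ (fun ω => (A ω, B ω)) (a, b) = pmass μ B b := by
  simp only [pmass, Prod.mk.injEq]
  rw [sum_comm]
  refine sum_congr rfl fun ω _ => ?_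
  by_cases h : B ω = b <;> simp [h]

variable [Fintype α] [DecidableEq α] [Fintype β] [DecidableEq β]

theorem entropy_comp_of_injective (X : Ω → α) {f : α → β} (hf : Injective f) :
    entropy μ (fun ω => f (X ω)) = entropy μ X := by
  refine (Fintype.sum_of_injective f hf _ _ (fun b hb => ?_) fun a => ?_).symm
  · simp only [pmass]
    rw [sum_eq_zero fun ω _ => if_neg fun h => hb ⟨X ω, h⟩, negMulLog_zero]
  · simp [pmass, hf.eq_iff]

theorem entropy_le_log_card (hμ0 : ∀ ω, 0 ≤ μ ω) (hμ1 : ∑ ω, μ ω = 1) (X : Ω → α) :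
    entropy μ X ≤ log (Fintype.card α) := by
  simpa [entropy, sum_pmass hμ1] using sum_negMulLog_le_negMulLog_sum_add _ (pmass_nonneg hμ0 X)

theorem entropy_pair_eq_add_of_indep (hμ1 : ∑ ω, μ ω = 1) (A : Ω → α) (B : Ω → β)
    (h : ∀ a b, pmass μ (fun ω => (A ω, B ω)) (a, b) = pmass μ A a * pmass μ B b) :
    entropy μ (fun ω => (A ω, B ω)) = entropy μ A + entropy μ B := by
  simp only [entropy, Fintype.sum_prod_type, h, negMulLog_mul, sum_add_distrib, ← sum_mul,
    ← mul_sum, sum_pmass hμ1, one_mul]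

theorem entropy_pair_le_add (hμ0 : ∀ ω, 0 ≤ μ ω) (hμ1 : ∑ ω, μ ω = 1) (A : Ω → α) (B : Ω → β) :
    entropy μ (fun ω => (A ω, B ω)) ≤ entropy μ A + entropy μ B := by
  set p := pmass μ (fun ω => (A ω, B ω))
  have hp : ∀ c, 0 ≤ p c := pmass_nonneg hμ0 _
  have hpA : ∀ a b, p (a, b) ≤ pmass μ A a := fun a b =>
    sum_pmass_pair_right A B a ▸ single_le_sum (fun b _ => hp (a, b)) (mem_univ b)
  have hpB : ∀ a b, p (a, b) ≤ pmass μ B b := fun a b =>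
    sum_pmass_pair_left A B b ▸ single_le_sum (fun a _ => hp (a, b)) (mem_univ a)
  have gibbs := sum_negMulLog_le_sum_neg_mul_log (r := fun c => pmass μ A c.1 * pmass μ B c.2)
    hp (fun c => mul_nonneg (pmass_nonneg hμ0 A _) (pmass_nonneg hμ0 B _)) (sum_pmass hμ1 _)
    (by rw [Fintype.sum_prod_type, ← sum_mul_sum, sum_pmass hμ1, sum_pmass hμ1, one_mul])
    (fun ⟨a, b⟩ h => by
      rcases mul_eq_zero.1 h with h | h
      · exact le_antisymm (h ▸ hpA a b) (hp _)
      · exact le_antisymm (h ▸ hpB a b) (hp _))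
  have split : ∀ c, p c * log (pmass μ A c.1 * pmass μ B c.2) =
      p c * log (pmass μ A c.1) + p c * log (pmass μ B c.2) := fun ⟨a, b⟩ => by
    obtain h | h := (hp (a, b)).eq_or_lt
    · simp [← h]
    · rw [log_mul (hpA a b |>.trans_lt' h).ne' (hpB a b |>.trans_lt' h).ne', mul_add]
  simp only [split, neg_add, sum_add_distrib, Fintype.sum_prod_type] at gibbs
  rw [entropy, Fintype.sum_prod_type]
  refine gibbs.trans_eq (congrArg₂ (· + ·) ?_ ?_)
  · simp only [entropy, negMulLog, neg_mul, sum_neg_distrib, ← sum_mul, p, sum_pmass_pair_right]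
  · rw [sum_comm]
    simp only [entropy, negMulLog, neg_mul, sum_neg_distrib, ← sum_mul, p, sum_pmass_pair_left]

theorem entropy_option_le (hμ0 : ∀ ω, 0 ≤ μ ω) (hμ1 : ∑ ω, μ ω = 1) (W : Ω → Option β) :
    entropy μ W ≤ log 2 + (1 - pmass μ W none) * log (Fintype.card β) := by
  have hsome : ∑ b, pmass μ W (some b) = 1 - pmass μ W none := by
    have total := sum_pmass hμ1 W
    rw [Fintype.sum_option] at total
    linarith
  have grouping := sum_negMulLog_le_negMulLog_sum_add _ fun b => pmass_nonneg hμ0 W (some b)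
  have binary := binEntropy_le_log_two (p := pmass μ W none)
  rw [hsome] at grouping
  rw [binEntropy_eq_negMulLog_add_negMulLog_one_sub] at binary
  rw [entropy, Fintype.sum_option]
  linarith

variable [Fintype γ] [DecidableEq γ]

theorem entropy_pair_map_fst_of_injective (A : Ω → α) (B : Ω → β) {f : β → α → γ}
    (hf : ∀ b, Injective (f b)) :
    entropy μ (fun ω => (f (B ω) (A ω), B ω)) = entropy μ (fun ω => (A ω, B ω)) :=
  entropy_comp_of_injective (fun ω => (A ω, B ω)) (f := fun c => (f c.2 c.1, c.2)) <| by
    rintro ⟨a, b⟩ ⟨a', b'⟩ h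
    simp only [Prod.mk.injEq] at h
    obtain ⟨h, rfl⟩ := h
    rw [hf b h]

theorem entropy_pair_map_snd_of_injective (A : Ω → α) (B : Ω → β) {f : α → β → γ}
    (hf : ∀ a, Injective (f a)) :
    entropy μ (fun ω => (A ω, f (A ω) (B ω))) = entropy μ (fun ω => (A ω, B ω)) :=
  entropy_comp_of_injective (fun ω => (A ω, B ω)) (f := fun c => (c.1, f c.1 c.2)) <| by
    rintro ⟨a, b⟩ ⟨a', b'⟩ h
    simp only [Prod.mk.injEq] at h
    obtain ⟨rfl, h⟩ := h
    rw [hf a h]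

end Entropy

theorem injective_sub_causal {G : Type*} [AddGroup G] {n : ℕ}
    (f : ∀ i : Fin n, (Fin i → G) → G) :
    Injective fun (y : Fin n → G) i => y i - f i (Fin.take i i.isLt.le y) := by
  intro y y' h
  funext i
  induction i using WellFoundedLT.induction with
  | ind i ih =>
    have past : Fin.take i i.isLt.le y = Fin.take i i.isLt.le y' :=
      funext fun j => ih _ j.isLt
    simpa [past] using congrFun h i

def macNoise {G α₁ α₂ : Type*} [AddCommGroup G] {n : ℕ}
    (g₁ : ∀ i : Fin n, α₁ → (Fin i → G) → G) (g₂ : ∀ i : Fin n, α₂ → (Fin i → G) → G)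
    (u₁ : α₁) (u₂ : α₂) (y : Fin n → G) : Fin n → G :=
  fun i => y i - g₁ i u₁ (Fin.take i i.isLt.le y) - g₂ i u₂ (Fin.take i i.isLt.le y)

theorem macNoise_injective {G α₁ α₂ : Type*} [AddCommGroup G] {n : ℕ}
    (g₁ : ∀ i : Fin n, α₁ → (Fin i → G) → G) (g₂ : ∀ i : Fin n, α₂ → (Fin i → G) → G)
    (u₁ : α₁) (u₂ : α₂) : Injective (macNoise g₁ g₂ u₁ u₂) := by
  convert injective_sub_causal fun i p => g₁ i u₁ p + g₂ i u₂ p using 1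
  funext y i
  exact sub_sub _ _ _

def decodingError {β γ : Type*} [DecidableEq β] (ψ : γ → β) (y : γ) (u : β) : Option β :=
  if ψ y = u then none else some u

theorem decodingError_injective {β γ : Type*} [DecidableEq β] (ψ : γ → β) (y : γ) :
    Injective (decodingError ψ y) := by
  intro u u' h
  by_cases hu : ψ y = u <;> by_cases hu' : ψ y = u' <;> simp_all [decodingError]

theorem additiveMAC_source_channel_converse_general
    {Ω 𝒰₁ 𝒰₂ : Type*} [Fintype Ω]
    [Fintype 𝒰₁] [DecidableEq 𝒰₁]
    [Fintype 𝒰₂] [DecidableEq 𝒰₂]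
    (q : ℕ) [NeZero q] {n : ℕ}
    (μ : Ω → ℝ) (hμ0 : ∀ ω, 0 ≤ μ ω) (hμ1 : ∑ ω, μ ω = 1)
    (U₁ : Ω → Fin n → 𝒰₁) (U₂ : Ω → Fin n → 𝒰₂)
    (V X₁ X₂ Y : Ω → Fin n → ZMod q)
    (hIndep : ∀ (v : Fin n → ZMod q) (u : (Fin n → 𝒰₁) × (Fin n → 𝒰₂)),
      pmass μ (fun ω => (V ω, (U₁ ω, U₂ ω))) (v, u) =
        pmass μ V v * pmass μ (fun ω => (U₁ ω, U₂ ω)) u)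
    (hEnc1 : ∀ i : Fin n, ∃ g : (Fin n → 𝒰₁) → (Fin (i : ℕ) → ZMod q) → ZMod q,
      ∀ ω, X₁ ω i = g (U₁ ω) (fun j => Y ω (Fin.castLE i.isLt.le j)))
    (hEnc2 : ∀ i : Fin n, ∃ g : (Fin n → 𝒰₂) → (Fin (i : ℕ) → ZMod q) → ZMod q,
      ∀ ω, X₂ ω i = g (U₂ ω) (fun j => Y ω (Fin.castLE i.isLt.le j)))
    (hAdd : ∀ ω (i : Fin n), Y ω i = X₁ ω i + X₂ ω i + V ω i)
    (ψ : (Fin n → ZMod q) → (Fin n → 𝒰₁) × (Fin n → 𝒰₂))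
    (Pe : ℝ)
    (hPe : Pe = ∑ ω, if ψ (Y ω) ≠ (U₁ ω, U₂ ω) then μ ω else 0) :
    entropy μ (fun ω => (U₁ ω, U₂ ω)) ≤
      n * Real.log q - entropy μ V + Real.log 2 +
        Pe * Real.log ((Fintype.card 𝒰₁ : ℝ) ^ n * (Fintype.card 𝒰₂ : ℝ) ^ n) := by
  choose g₁ hg₁ using hEnc1
  choose g₂ hg₂ using hEnc2
  set U := fun ω => (U₁ ω, U₂ ω)
  set W := fun ω => decodingError ψ (Y ω) (U ω)
  have hV : V = fun ω => macNoise g₁ g₂ (U ω).1 (U ω).2 (Y ω) := by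
    funext ω i
    have h₁ : X₁ ω i = g₁ i (U₁ ω) (Fin.take i i.isLt.le (Y ω)) := hg₁ i ω
    have h₂ : X₂ ω i = g₂ i (U₂ ω) (Fin.take i i.isLt.le (Y ω)) := hg₂ i ω
    simp only [macNoise, U]
    rw [← h₁, ← h₂, hAdd]
    abel
  have hW : 1 - pmass μ W none = Pe := by
    rw [hPe, ← hμ1, pmass, ← sum_sub_distrib]
    refine sum_congr rfl fun ω _ => ?_
    by_cases h : ψ (Y ω) = U ω <;> simp [W, U, decodingError, h]
  calc entropy μ U
      = entropy μ (fun ω => (V ω, U ω)) - entropy μ V := by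
        rw [entropy_pair_eq_add_of_indep hμ1 V U hIndep]
        ring
    _ = entropy μ (fun ω => (Y ω, W ω)) - entropy μ V := by
        rw [entropy_pair_map_snd_of_injective Y U (decodingError_injective ψ), hV,
          entropy_pair_map_fst_of_injective Y U fun u => macNoise_injective g₁ g₂ u.1 u.2]
    _ ≤ entropy μ Y + entropy μ W - entropy μ V := by
        gcongr
        exact entropy_pair_le_add hμ0 hμ1 Y W
    _ ≤ n * log q + (log 2 + (1 - pmass μ W none) * log (Fintype.card _)) - entropy μ V := by
        gcongr
        · simpa using entropy_le_log_card hμ0 hμ1 Y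
        · exact entropy_option_le hμ0 hμ1 W
    _ = _ := by
        rw [hW, Fintype.card_prod, Fintype.card_fun, Fintype.card_fun, Fintype.card_fin]
        push_cast
        ring

/-- Source–channel converse (finite-blocklength Fano form) for the additive mod-`q` MAC:
with sources `(U₁^n, U₂^n)`, noise `V^n` independent of the sources, encoders
`X_{l,i} = g_{l,i}(U_l^n, Y^{i-1})`, channel `Y_i = X_{1,i} + X_{2,i} + V_i` (mod `q`),
decoder `(Û₁^n, Û₂^n) = ψ(Y^n)` and error probability
`P_e = Pr((Û₁^n, Û₂^n) ≠ (U₁^n, U₂^n))`, one has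
`H(U₁^n, U₂^n) ≤ n log q − H(V^n) + log 2 + P_e log(|𝒰₁|^n |𝒰₂|^n)`. -/
theorem additiveMAC_source_channel_converse
    {Ω 𝒰₁ 𝒰₂ : Type*} [Fintype Ω]
    [Fintype 𝒰₁] [DecidableEq 𝒰₁] [Nonempty 𝒰₁]
    [Fintype 𝒰₂] [DecidableEq 𝒰₂] [Nonempty 𝒰₂]
    (q : ℕ) [NeZero q] {n : ℕ} (hn : 1 ≤ n)
    (μ : Ω → ℝ) (hμ0 : ∀ ω, 0 ≤ μ ω) (hμ1 : ∑ ω, μ ω = 1)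
    (U₁ : Ω → Fin n → 𝒰₁) (U₂ : Ω → Fin n → 𝒰₂)
    (V X₁ X₂ Y : Ω → Fin n → ZMod q)
    (hIndep : ∀ (v : Fin n → ZMod q) (u : (Fin n → 𝒰₁) × (Fin n → 𝒰₂)),
      pmass μ (fun ω => (V ω, (U₁ ω, U₂ ω))) (v, u) =
        pmass μ V v * pmass μ (fun ω => (U₁ ω, U₂ ω)) u)
    (hEnc1 : ∀ i : Fin n, ∃ g : (Fin n → 𝒰₁) → (Fin (i : ℕ) → ZMod q) → ZMod q,
      ∀ ω, X₁ ω i = g (U₁ ω) (fun j => Y ω (Fin.castLE i.isLt.le j)))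
    (hEnc2 : ∀ i : Fin n, ∃ g : (Fin n → 𝒰₂) → (Fin (i : ℕ) → ZMod q) → ZMod q,
      ∀ ω, X₂ ω i = g (U₂ ω) (fun j => Y ω (Fin.castLE i.isLt.le j)))
    (hAdd : ∀ ω (i : Fin n), Y ω i = X₁ ω i + X₂ ω i + V ω i)
    (ψ : (Fin n → ZMod q) → (Fin n → 𝒰₁) × (Fin n → 𝒰₂))
    (Pe : ℝ)
    (hPe : Pe = ∑ ω, if ψ (Y ω) ≠ (U₁ ω, U₂ ω) then μ ω else 0) :
    entropy μ (fun ω => (U₁ ω, U₂ ω)) ≤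
      n * Real.log q - entropy μ V + Real.log 2 +
        Pe * Real.log ((Fintype.card 𝒰₁ : ℝ) ^ n * (Fintype.card 𝒰₂ : ℝ) ^ n) :=
  additiveMAC_source_channel_converse_general q μ hμ0 hμ1 U₁ U₂ V X₁ X₂ Y hIndep hEnc1 hEnc2 hAdd ψ
    Pe hPe
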